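/- If X* is a global minimizer of F(X) = f(X) + λ‖X‖_* with SVD X* = U* S* (V*)^T, then for any k ≥ rank(X*), setting W* = U* (S*)^{1/2} and H* = V* (S*)^{1/2} (padded with zero columns to width k) gives a global minimizer of F(W,H) = f(W H^T) + (λ/2)(‖W‖_F² + ‖H‖_F²) over R^{m×k} × R^{n×k}. -/

import Mathlib

open Matrix

noncomputable def frobNorm {m n : ℕ} (X : Matrix (Fin m) (Fin n) ℝ) : ℝ :=
  Real.sqrt (∑ i, ∑ j, (X i j) ^ 2)

noncomputable def nuclearNorm {m n : ℕ} (X : Matrix (Fin m) (Fin n) ℝ) : ℝ :=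
  ∑ i, Real.sqrt ((by simpa using Matrix.isHermitian_conjTranspose_mul_self X : (Xᵀ * X).IsHermitian).eigenvalues i)

/-!
Every factorization `X = W Hᵀ` satisfies `‖X‖_* ≤ (‖W‖_F² + ‖H‖_F²) / 2`, and the balanced
factorization `W* = U* √S*`, `H* = V* √S*` attains `(‖W*‖_F² + ‖H*‖_F²) / 2 = tr S* ≤ ‖X*‖_*`. Hence
`F(W, H) ≥ f(W Hᵀ) + λ ‖W Hᵀ‖_* ≥ f(X*) + λ ‖X*‖_* ≥ F(W*, H*)`. Both nuclear-norm inequalities come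
from the duality `‖A‖_* = max {tr (Bᵀ A) | B a contraction}`, computed in an eigenbasis of `Aᵀ A`
in which the columns of `A` are orthogonal with norms the singular values; the maximum is attained
at the polar factor of `A`.
-/

section DotProduct

variable {κ : Type*} [Fintype κ]

theorem dotProduct_self_nonneg (v : κ → ℝ) : 0 ≤ v ⬝ᵥ v :=
  Finset.sum_nonneg fun i _ => mul_self_nonneg (v i)

theorem dotProduct_sq_le (v w : κ → ℝ) : (v ⬝ᵥ w) ^ 2 ≤ (v ⬝ᵥ v) * (w ⬝ᵥ w) := by
  simpa only [dotProduct, sq] using Finset.sum_mul_sq_le_sq_mul_sq Finset.univ v w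

end DotProduct

namespace Matrix

section Real

variable {ι κ ν : Type*} [Fintype κ]

theorem mulVec_dotProduct_mulVec_self [Fintype ι] (M : Matrix ι κ ℝ) (x : κ → ℝ) :
    M *ᵥ x ⬝ᵥ M *ᵥ x = x ⬝ᵥ (Mᵀ * M) *ᵥ x := by
  rw [← mulVec_mulVec, dotProduct_mulVec x, vecMul_transpose]

theorem transpose_mul_apply_eq_mulVec (B : Matrix ι κ ℝ) (W : Matrix κ ν ℝ) (j : ν) :
    (B * W)ᵀ j = B *ᵥ Wᵀ j :=
  rfl

theorem trace_transpose_mul_eq_sum_dotProduct [Fintype ι] (X Y : Matrix ι κ ℝ) :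
    trace (Xᵀ * Y) = ∑ j, Xᵀ j ⬝ᵥ Yᵀ j :=
  rfl

theorem transpose_mul_self_apply_self (X : Matrix κ ι ℝ) (j : ι) :
    (Xᵀ * X) j j = Xᵀ j ⬝ᵥ Xᵀ j :=
  rfl

theorem trace_transpose_mul_le [Fintype ι] (X Y : Matrix ι κ ℝ) :
    trace (Xᵀ * Y) ≤ (trace (Xᵀ * X) + trace (Yᵀ * Y)) / 2 := by
  simp only [trace_transpose_mul_eq_sum_dotProduct, dotProduct, ← Finset.sum_add_distrib,
    Finset.sum_div]
  gcongr with j _ i _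
  nlinarith [sq_nonneg (Xᵀ j i - Yᵀ j i)]

def IsContraction [Fintype ι] (B : Matrix ι κ ℝ) : Prop :=
  ∀ x : κ → ℝ, B *ᵥ x ⬝ᵥ B *ᵥ x ≤ x ⬝ᵥ x

namespace IsContraction

variable [Fintype ι]

theorem of_transpose_mul_self_eq_diagonal [DecidableEq κ] {M : Matrix ι κ ℝ} {c : κ → ℝ}
    (hM : Mᵀ * M = diagonal c) (hc : ∀ j, c j ≤ 1) : IsContraction M := by
  intro x
  rw [mulVec_dotProduct_mulVec_self, hM]
  simp only [dotProduct, mulVec_diagonal]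
  exact Finset.sum_le_sum fun j _ => by
    nlinarith [mul_le_mul_of_nonneg_right (hc j) (mul_self_nonneg (x j))]

theorem of_transpose_mul_self_eq_one [DecidableEq κ] {M : Matrix ι κ ℝ} (hM : Mᵀ * M = 1) :
    IsContraction M :=
  of_transpose_mul_self_eq_diagonal (c := 1) hM fun _ => le_rfl

theorem mul [Fintype ν] {A : Matrix ι κ ℝ} {B : Matrix κ ν ℝ} (hA : IsContraction A)
    (hB : IsContraction B) : IsContraction (A * B) := fun x => by
  rw [← mulVec_mulVec]
  exact (hA _).trans (hB x)

theorem transpose {B : Matrix ι κ ℝ} (hB : IsContraction B) : IsContraction Bᵀ := by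
  intro x
  set y := Bᵀ *ᵥ x
  have hy : y ⬝ᵥ y = x ⬝ᵥ B *ᵥ y := by
    rw [dotProduct_mulVec, ← mulVec_transpose, transpose_transpose, dotProduct_comm]
  have hCS : (y ⬝ᵥ y) ^ 2 ≤ (x ⬝ᵥ x) * (y ⬝ᵥ y) :=
    calc (y ⬝ᵥ y) ^ 2 ≤ (x ⬝ᵥ x) * (B *ᵥ y ⬝ᵥ B *ᵥ y) := hy ▸ dotProduct_sq_le x _
      _ ≤ (x ⬝ᵥ x) * (y ⬝ᵥ y) := by gcongr; exacts [dotProduct_self_nonneg x, hB y]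
  nlinarith [dotProduct_self_nonneg x, dotProduct_self_nonneg y]

theorem trace_transpose_mul_self_le [Fintype ν] {B : Matrix ι κ ℝ} (hB : IsContraction B)
    (W : Matrix κ ν ℝ) : trace ((B * W)ᵀ * (B * W)) ≤ trace (Wᵀ * W) := by
  simp only [trace_transpose_mul_eq_sum_dotProduct, transpose_mul_apply_eq_mulVec]
  exact Finset.sum_le_sum fun j _ => hB (Wᵀ j)

end IsContraction

theorem IsHermitian.exists_orthogonal_transpose_mul_mul_eq_diagonal [DecidableEq κ]
    {S : Matrix κ κ ℝ} (hS : S.IsHermitian) :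
    ∃ Q : Matrix κ κ ℝ, Qᵀ * Q = 1 ∧ Q * Qᵀ = 1 ∧ Qᵀ * S * Q = diagonal hS.eigenvalues := by
  set Q : Matrix κ κ ℝ := (hS.eigenvectorUnitary : Matrix κ κ ℝ)
  have hstar : star Q = Qᵀ := by
    rw [star_eq_conjTranspose, conjTranspose_eq_transpose_of_trivial]
  refine ⟨Q, ?_, ?_, ?_⟩
  · rw [← hstar]; exact Unitary.coe_star_mul_self hS.eigenvectorUnitary
  · rw [← hstar]; exact Unitary.coe_mul_star_self hS.eigenvectorUnitary
  · have h := hS.conjStarAlgAut_star_eigenvectorUnitary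
    rw [Unitary.conjStarAlgAut_star_apply] at h
    rw [← hstar]
    simpa using h

theorem exists_orthogonal_gram_eq_diagonal [Fintype ι] [DecidableEq κ] (A : Matrix ι κ ℝ)
    (hG : (Aᵀ * A).IsHermitian) :
    ∃ Q : Matrix κ κ ℝ, Qᵀ * Q = 1 ∧ Q * Qᵀ = 1 ∧
      (A * Q)ᵀ * (A * Q) = diagonal hG.eigenvalues := by
  obtain ⟨Q, hQ, hQ', hdiag⟩ := hG.exists_orthogonal_transpose_mul_mul_eq_diagonal
  refine ⟨Q, hQ, hQ', ?_⟩
  rw [transpose_mul, ← hdiag]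
  simp only [Matrix.mul_assoc]

end Real

end Matrix

section FrobeniusNorm

variable {m n r s k : ℕ}

theorem frobNorm_sq (X : Matrix (Fin m) (Fin n) ℝ) : frobNorm X ^ 2 = trace (Xᵀ * X) := by
  rw [frobNorm, Real.sq_sqrt (by positivity), Finset.sum_comm]
  simp [trace, mul_apply, sq]

theorem frobNorm_sq_mul_mul {U : Matrix (Fin m) (Fin r) ℝ} {E : Matrix (Fin s) (Fin k) ℝ}
    (hU : Uᵀ * U = 1) (hE : E * Eᵀ = 1) (M : Matrix (Fin r) (Fin s) ℝ) :
    frobNorm (U * M * E) ^ 2 = frobNorm M ^ 2 := by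
  rw [frobNorm_sq, frobNorm_sq, transpose_mul, transpose_mul]
  simp only [Matrix.mul_assoc]
  rw [← Matrix.mul_assoc Uᵀ U, hU, Matrix.one_mul, trace_mul_comm Eᵀ]
  simp only [Matrix.mul_assoc, hE, Matrix.mul_one]

theorem frobNorm_diagonal_sq (d : Fin r → ℝ) : frobNorm (diagonal d) ^ 2 = ∑ i, d i ^ 2 := by
  rw [frobNorm_sq, diagonal_transpose, diagonal_mul_diagonal, trace_diagonal]
  simp only [sq]

end FrobeniusNorm

section PadIdentity

variable {m r k : ℕ}

def padIdentity (hk : r ≤ k) : Matrix (Fin r) (Fin k) ℝ :=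
  (1 : Matrix (Fin k) (Fin k) ℝ).submatrix (Fin.castLE hk) id

theorem padIdentity_mul_transpose (hk : r ≤ k) : padIdentity hk * (padIdentity hk)ᵀ = 1 := by
  rw [padIdentity, transpose_submatrix, transpose_one,
    ← submatrix_mul _ _ _ _ _ Function.bijective_id, Matrix.one_mul,
    submatrix_one _ (Fin.castLE_injective hk)]

theorem mul_padIdentity (hk : r ≤ k) (M : Matrix (Fin m) (Fin r) ℝ) :
    M * padIdentity hk = of fun i (j : Fin k) => if h : (j : ℕ) < r then M i ⟨j, h⟩ else 0 := by
  ext i j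
  simp only [padIdentity, mul_apply, submatrix_apply, one_apply, id, Fin.ext_iff, Fin.val_castLE,
    mul_ite, mul_one, mul_zero, of_apply]
  split_ifs with h
  · rw [Fintype.sum_eq_single ⟨j, h⟩ fun t ht => if_neg fun e => ht (Fin.ext e)]
    simp
  · exact Finset.sum_eq_zero fun t _ => if_neg fun (e : (t : ℕ) = j) => h (e ▸ t.isLt)

end PadIdentity

section NuclearNorm

variable {m n r k : ℕ}

theorem nuclearNorm_eq_sum_sqrt_eigenvalues (A : Matrix (Fin m) (Fin n) ℝ)
    (hG : (Aᵀ * A).IsHermitian) : nuclearNorm A = ∑ j, √(hG.eigenvalues j) :=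
  rfl

theorem trace_transpose_mul_le_nuclearNorm {B : Matrix (Fin m) (Fin n) ℝ} (hB : B.IsContraction)
    (A : Matrix (Fin m) (Fin n) ℝ) : trace (Bᵀ * A) ≤ nuclearNorm A := by
  have hG : (Aᵀ * A).IsHermitian := by simpa using isHermitian_conjTranspose_mul_self A
  obtain ⟨Q, hQ, hQ', hAQ⟩ := exists_orthogonal_gram_eq_diagonal A hG
  have hcol (j : Fin n) : Qᵀ j ⬝ᵥ Qᵀ j = 1 := by
    rw [← transpose_mul_self_apply_self, hQ, one_apply_eq]
  have hAcol (j : Fin n) : (A * Q)ᵀ j ⬝ᵥ (A * Q)ᵀ j = hG.eigenvalues j := by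
    rw [← transpose_mul_self_apply_self, hAQ, diagonal_apply_eq]
  calc trace (Bᵀ * A) = trace ((B * Q)ᵀ * (A * Q)) := by
        rw [transpose_mul, Matrix.mul_assoc, trace_mul_comm Qᵀ]
        simp only [Matrix.mul_assoc, hQ', Matrix.mul_one]
    _ = ∑ j, (B * Q)ᵀ j ⬝ᵥ (A * Q)ᵀ j := trace_transpose_mul_eq_sum_dotProduct _ _
    _ ≤ ∑ j, √(hG.eigenvalues j) := Finset.sum_le_sum fun j _ => by
        refine (le_abs_self _).trans (Real.abs_le_sqrt ?_)
        calc ((B * Q)ᵀ j ⬝ᵥ (A * Q)ᵀ j) ^ 2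
            ≤ ((B * Q)ᵀ j ⬝ᵥ (B * Q)ᵀ j) * ((A * Q)ᵀ j ⬝ᵥ (A * Q)ᵀ j) := dotProduct_sq_le _ _
          _ ≤ (Qᵀ j ⬝ᵥ Qᵀ j) * ((A * Q)ᵀ j ⬝ᵥ (A * Q)ᵀ j) := by
            gcongr
            · exact dotProduct_self_nonneg _
            · exact hB _
          _ = hG.eigenvalues j := by rw [hcol, hAcol, one_mul]

theorem exists_isContraction_trace_eq_nuclearNorm (A : Matrix (Fin m) (Fin n) ℝ) :
    ∃ B : Matrix (Fin m) (Fin n) ℝ, B.IsContraction ∧ trace (Bᵀ * A) = nuclearNorm A := by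
  have hG : (Aᵀ * A).IsHermitian := by simpa using isHermitian_conjTranspose_mul_self A
  obtain ⟨Q, hQ, hQ', hAQ⟩ := exists_orthogonal_gram_eq_diagonal A hG
  set μ := hG.eigenvalues
  -- `D` inverts the singular values; on the kernel of `A` it is `(√0)⁻¹ = 0`.
  set D := diagonal fun j => (√(μ j))⁻¹
  have hgram :
      (A * Q * D)ᵀ * (A * Q * D) = diagonal fun j => (√(μ j))⁻¹ * (μ j * (√(μ j))⁻¹) := by
    rw [transpose_mul, diagonal_transpose, Matrix.mul_assoc, ← Matrix.mul_assoc _ (A * Q), hAQ]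
    simp only [D, diagonal_mul_diagonal]
  refine ⟨A * Q * D * Qᵀ, ?_, ?_⟩
  · refine (IsContraction.of_transpose_mul_self_eq_diagonal hgram fun j => ?_).mul
      (IsContraction.of_transpose_mul_self_eq_one (by rw [transpose_transpose, hQ']))
    rw [← mul_assoc, inv_mul_eq_div, Real.div_sqrt]
    exact mul_inv_le_one
  · rw [nuclearNorm_eq_sum_sqrt_eigenvalues A hG, transpose_mul, transpose_transpose,
      Matrix.mul_assoc, trace_mul_comm, Matrix.mul_assoc, transpose_mul, Matrix.mul_assoc, hAQ]
    simp only [D, diagonal_transpose, diagonal_mul_diagonal, trace_diagonal, inv_mul_eq_div,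
      Real.div_sqrt, μ]

theorem nuclearNorm_mul_transpose_le (W : Matrix (Fin m) (Fin k) ℝ) (H : Matrix (Fin n) (Fin k) ℝ) :
    nuclearNorm (W * Hᵀ) ≤ (frobNorm W ^ 2 + frobNorm H ^ 2) / 2 := by
  obtain ⟨B, hB, hBA⟩ := exists_isContraction_trace_eq_nuclearNorm (W * Hᵀ)
  rw [← hBA, frobNorm_sq, frobNorm_sq]
  calc trace (Bᵀ * (W * Hᵀ)) = trace ((B * H)ᵀ * W) := by
        rw [← Matrix.mul_assoc, trace_mul_comm, transpose_mul, Matrix.mul_assoc]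
    _ ≤ (trace ((B * H)ᵀ * (B * H)) + trace (Wᵀ * W)) / 2 := trace_transpose_mul_le _ _
    _ ≤ (trace (Hᵀ * H) + trace (Wᵀ * W)) / 2 := by gcongr; exact hB.trace_transpose_mul_self_le H
    _ = (trace (Wᵀ * W) + trace (Hᵀ * H)) / 2 := by rw [add_comm]

theorem sum_le_nuclearNorm_mul_diagonal_mul_transpose {U : Matrix (Fin m) (Fin r) ℝ}
    {V : Matrix (Fin n) (Fin r) ℝ} (hU : Uᵀ * U = 1) (hV : Vᵀ * V = 1) (σ : Fin r → ℝ) :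
    ∑ i, σ i ≤ nuclearNorm (U * diagonal σ * Vᵀ) := by
  have hB : (U * Vᵀ).IsContraction :=
    (IsContraction.of_transpose_mul_self_eq_one hU).mul
      (IsContraction.of_transpose_mul_self_eq_one hV).transpose
  have htrace : trace ((U * Vᵀ)ᵀ * (U * diagonal σ * Vᵀ)) = ∑ i, σ i := by
    rw [transpose_mul, transpose_transpose]
    simp only [Matrix.mul_assoc]
    rw [← Matrix.mul_assoc Uᵀ U, hU, Matrix.one_mul, trace_mul_comm, Matrix.mul_assoc, hV,
      Matrix.mul_one, trace_diagonal]
  exact htrace ▸ trace_transpose_mul_le_nuclearNorm hB _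

end NuclearNorm

theorem mc_min_gives_mf_min_general {m n r k : ℕ}
    (f : Matrix (Fin m) (Fin n) ℝ → ℝ)
    (lam : ℝ) (hlam : 0 < lam)
    (Xstar : Matrix (Fin m) (Fin n) ℝ)
    (hXmin : IsMinOn (fun X => f X + lam * nuclearNorm X) Set.univ Xstar)
    (U : Matrix (Fin m) (Fin r) ℝ) (V : Matrix (Fin n) (Fin r) ℝ) (σ : Fin r → ℝ)
    (hU : Uᵀ * U = 1) (hV : Vᵀ * V = 1) (hσ : ∀ i, 0 < σ i)
    (hSVD : Xstar = U * Matrix.diagonal σ * Vᵀ)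
    (hk : r ≤ k)
    (Wstar : Matrix (Fin m) (Fin k) ℝ)
    (hW : Wstar = Matrix.of fun i (j : Fin k) =>
      if h : (j : ℕ) < r then U i ⟨j, h⟩ * Real.sqrt (σ ⟨j, h⟩) else 0)
    (Hstar : Matrix (Fin n) (Fin k) ℝ)
    (hH : Hstar = Matrix.of fun i (j : Fin k) =>
      if h : (j : ℕ) < r then V i ⟨j, h⟩ * Real.sqrt (σ ⟨j, h⟩) else 0) :
    IsMinOn
      (fun p : Matrix (Fin m) (Fin k) ℝ × Matrix (Fin n) (Fin k) ℝ =>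
        f (p.1 * p.2ᵀ) + lam / 2 * (frobNorm p.1 ^ 2 + frobNorm p.2 ^ 2))
      Set.univ (Wstar, Hstar) := by
  set D := diagonal fun i => √(σ i)
  have hW' : Wstar = U * D * padIdentity hk := by simp only [hW, mul_padIdentity, D, mul_diagonal]
  have hH' : Hstar = V * D * padIdentity hk := by simp only [hH, mul_padIdentity, D, mul_diagonal]
  have hWH : Wstar * Hstarᵀ = Xstar := by
    rw [hW', hH', hSVD, transpose_mul, transpose_mul, diagonal_transpose]
    simp only [Matrix.mul_assoc]
    rw [← Matrix.mul_assoc (padIdentity hk), padIdentity_mul_transpose, Matrix.one_mul,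
      ← Matrix.mul_assoc D, diagonal_mul_diagonal]
    simp only [Real.mul_self_sqrt (hσ _).le]
  have hfrobD : frobNorm D ^ 2 = ∑ i, σ i := by
    simp only [D, frobNorm_diagonal_sq, Real.sq_sqrt (hσ _).le]
  have hfrobW : frobNorm Wstar ^ 2 = ∑ i, σ i := by
    rw [hW', frobNorm_sq_mul_mul hU (padIdentity_mul_transpose hk), hfrobD]
  have hfrobH : frobNorm Hstar ^ 2 = ∑ i, σ i := by
    rw [hH', frobNorm_sq_mul_mul hV (padIdentity_mul_transpose hk), hfrobD]
  have hσX : ∑ i, σ i ≤ nuclearNorm Xstar :=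
    hSVD ▸ sum_le_nuclearNorm_mul_diagonal_mul_transpose hU hV σ
  rintro ⟨W, H⟩ -
  have hmin := hXmin (Set.mem_univ (W * Hᵀ))
  have hWH_le := mul_le_mul_of_nonneg_left (nuclearNorm_mul_transpose_le W H) hlam.le
  have hσ_le := mul_le_mul_of_nonneg_left hσX hlam.le
  simp only [Set.mem_ofPred_eq, hWH, hfrobW, hfrobH] at hmin ⊢
  linarith

/-- If `X*` globally minimizes the lifted convex objective, with SVD
`X* = U* S* (V*)ᵀ` (positive singular values `σ`, `r = rank X*`), then for any
`k ≥ r`, `W* = U* (S*)^{1/2}` and `H* = V* (S*)^{1/2}` padded with zero columns to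
width `k` form a global minimizer of the factorized objective. -/
theorem mc_min_gives_mf_min {m n r k : ℕ}
    (f : Matrix (Fin m) (Fin n) ℝ → ℝ) (hf : ConvexOn ℝ Set.univ f)
    (lam : ℝ) (hlam : 0 < lam)
    (Xstar : Matrix (Fin m) (Fin n) ℝ)
    (hXmin : IsMinOn (fun X => f X + lam * nuclearNorm X) Set.univ Xstar)
    (U : Matrix (Fin m) (Fin r) ℝ) (V : Matrix (Fin n) (Fin r) ℝ) (σ : Fin r → ℝ)
    (hU : Uᵀ * U = 1) (hV : Vᵀ * V = 1) (hσ : ∀ i, 0 < σ i)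
    (hSVD : Xstar = U * Matrix.diagonal σ * Vᵀ)
    (hrank : Xstar.rank = r)
    (hk : r ≤ k)
    (Wstar : Matrix (Fin m) (Fin k) ℝ)
    (hW : Wstar = Matrix.of fun i (j : Fin k) =>
      if h : (j : ℕ) < r then U i ⟨j, h⟩ * Real.sqrt (σ ⟨j, h⟩) else 0)
    (Hstar : Matrix (Fin n) (Fin k) ℝ)
    (hH : Hstar = Matrix.of fun i (j : Fin k) =>
      if h : (j : ℕ) < r then V i ⟨j, h⟩ * Real.sqrt (σ ⟨j, h⟩) else 0) :
    IsMinOn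
      (fun p : Matrix (Fin m) (Fin k) ℝ × Matrix (Fin n) (Fin k) ℝ =>
        f (p.1 * p.2ᵀ) + lam / 2 * (frobNorm p.1 ^ 2 + frobNorm p.2 ^ 2))
      Set.univ (Wstar, Hstar) :=
  mc_min_gives_mf_min_general f lam hlam Xstar hXmin U V σ hU hV hσ hSVD hk Wstar hW Hstar hH
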